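/- arXiv:1407.0503 — 2 statements merged into one kernel-verified Lean document; each statement's English description precedes it below -/
import Mathlib

section
/- Let X and Y be topological spaces, let E ⊆ X be an ambiguous subset of X (both an Fσ-set and a Gδ-set in X), let Y be nonempty, and let f : E → Y be a mapping of the first Lebesgue class (with respect to the subspace topology on E). Then there exists a mapping g : X → Y of the first Lebesgue class such that g restricted to E equals f. -/
/-- A set is an Fσ-set if it is a countable union of closed sets. -/
def IsFsigma {X : Type*} [TopologicalSpace X] (A : Set X) : Prop :=
  ∃ F : ℕ → Set X, (∀ n, IsClosed (F n)) ∧ A = ⋃ n, F n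

/-- A mapping is of the first Lebesgue class if the preimage of every open set is Fσ. -/
def LebesgueClassOne {X Y : Type*} [TopologicalSpace X] [TopologicalSpace Y] (g : X → Y) : Prop :=
  ∀ V : Set Y, IsOpen V → IsFsigma (g ⁻¹' V)

/-- `E` is an H₁-retract of `X` if there is a first Lebesgue class map `r : X → E`
fixing the points of `E`. -/
def IsH1Retract {X : Type*} [TopologicalSpace X] (E : Set X) : Prop :=
  ∃ r : X → E, (∀ x : E, r x = x) ∧ LebesgueClassOne r

/-!
Extend `f` by a constant `y₀` off `E`. On `E` the preimage of an open set is an Fσ subset of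
`E`, which is Fσ in `X` because `E` itself is Fσ; off `E` it is `Eᶜ` or `∅`, and `Eᶜ` is Fσ
because `E` is Gδ. Hence the preimage is the union of two Fσ-sets.
-/

section Fsigma

variable {X : Type*} [TopologicalSpace X]

lemma IsClosed.isFsigma {A : Set X} (hA : IsClosed A) : IsFsigma A :=
  ⟨fun _ => A, fun _ => hA, (Set.iUnion_const A).symm⟩

lemma IsFsigma.union {A B : Set X} (hA : IsFsigma A) (hB : IsFsigma B) : IsFsigma (A ∪ B) := by
  obtain ⟨F, hF, rfl⟩ := hA
  obtain ⟨G, hG, rfl⟩ := hB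
  exact ⟨fun n => F n ∪ G n, fun n => (hF n).union (hG n), (Set.iUnion_union_distrib F G).symm⟩

lemma IsFsigma.iUnion {A : ℕ → Set X} (hA : ∀ n, IsFsigma (A n)) : IsFsigma (⋃ n, A n) := by
  choose F hF hAF using hA
  refine ⟨fun k => F k.unpair.1 k.unpair.2, fun k => hF _ _, ?_⟩
  rw [Set.iUnion_unpair]
  exact Set.iUnion_congr hAF

lemma IsFsigma.inter_isClosed {A C : Set X} (hA : IsFsigma A) (hC : IsClosed C) :
    IsFsigma (A ∩ C) := by
  obtain ⟨F, hF, rfl⟩ := hA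
  exact ⟨fun n => F n ∩ C, fun n => (hF n).inter hC, Set.iUnion_inter C F⟩

lemma IsGδ.isFsigma_compl {E : Set X} (hE : IsGδ E) : IsFsigma Eᶜ := by
  obtain ⟨U, hU, rfl⟩ := isGδ_iff_eq_iInter_nat.mp hE
  exact ⟨fun n => (U n)ᶜ, fun n => (hU n).isClosed_compl, Set.compl_iInter U⟩

lemma IsFsigma.image_val {E : Set X} (hE : IsFsigma E) {A : Set E} (hA : IsFsigma A) :
    IsFsigma (Subtype.val '' A) := by
  obtain ⟨G, hG, rfl⟩ := hA
  rw [Set.image_iUnion]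
  refine IsFsigma.iUnion fun n => ?_
  obtain ⟨C, hC, hCG⟩ := isClosed_induced_iff.mp (hG n)
  rw [← hCG, Subtype.image_preimage_coe]
  exact hE.inter_isClosed hC

end Fsigma

section LebesgueClassOne

variable {X Y : Type*} [TopologicalSpace X] [TopologicalSpace Y]

lemma lebesgueClassOne_const (y : Y) : LebesgueClassOne (fun _ : X => y) :=
  fun _ _ => isClosed_const.isFsigma

lemma LebesgueClassOne.of_comp_val_of_comp_val_compl {E : Set X} (hE : IsFsigma E)
    (hEc : IsFsigma Eᶜ) {g : X → Y} (hg : LebesgueClassOne (g ∘ ((↑) : E → X)))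
    (hgc : LebesgueClassOne (g ∘ ((↑) : ↥Eᶜ → X))) : LebesgueClassOne g := by
  intro V hV
  have hsplit : g ⁻¹' V = Subtype.val '' ((g ∘ (↑)) ⁻¹' V : Set E) ∪
      Subtype.val '' ((g ∘ (↑)) ⁻¹' V : Set ↥Eᶜ) := by
    rw [Set.preimage_comp, Set.preimage_comp, Subtype.image_preimage_coe,
      Subtype.image_preimage_coe, ← Set.union_inter_distrib_right, Set.union_compl_self,
      Set.univ_inter]
  rw [hsplit]
  exact (hE.image_val (hg V hV)).union (hEc.image_val (hgc V hV))

end LebesgueClassOne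

/-- A first Lebesgue class mapping on an ambiguous (simultaneously Fσ and Gδ) subset
extends to a first Lebesgue class mapping on the whole space. -/
theorem extend_lebesgueClassOne_of_ambiguous {X Y : Type*} [TopologicalSpace X]
    [TopologicalSpace Y] [Nonempty Y] {E : Set X}
    (hFσ : IsFsigma E) (hGδ : IsGδ E)
    (f : E → Y) (hf : LebesgueClassOne f) :
    ∃ g : X → Y, LebesgueClassOne g ∧ ∀ x : E, g x = f x := by
  classical
  obtain ⟨y₀⟩ := ‹Nonempty Y›
  set g : X → Y := fun x => if h : x ∈ E then f ⟨x, h⟩ else y₀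
  have hg_on : g ∘ ((↑) : E → X) = f := funext fun x => dif_pos x.2
  have hg_off : g ∘ ((↑) : ↥Eᶜ → X) = fun _ => y₀ := funext fun x => dif_neg x.2
  refine ⟨g, ?_, fun x => congr_fun hg_on x⟩
  exact LebesgueClassOne.of_comp_val_of_comp_val_compl hFσ hGδ.isFsigma_compl
    (hg_on ▸ hf) (hg_off ▸ lebesgueClassOne_const y₀)
end

section
/- Let X be a Hausdorff perfect paracompact topological space (perfect meaning every open subset of X is an Fσ-set) and let 𝒢 be a locally finite cover of X by ambiguous sets (sets that are both Fσ and Gδ in X). Then there exists a cover 𝒜 of X by pairwise disjoint ambiguous sets which is locally finite and refines 𝒢 (each member of 𝒜 is contained in some member of 𝒢). -/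
section Aux

variable {X : Type*} [TopologicalSpace X]

lemma isFsigma_iff_isGδ_compl {A : Set X} : IsFsigma A ↔ IsGδ Aᶜ := by
  constructor
  · rintro ⟨F, hF, rfl⟩
    rw [Set.compl_iUnion]
    exact .iInter_of_isOpen fun n => (hF n).isOpen_compl
  · intro h
    obtain ⟨f, hf, hA⟩ := h.eq_iInter_nat
    refine ⟨fun n => (f n)ᶜ, fun n => (hf n).isClosed_compl, ?_⟩
    rw [← Set.compl_iInter, ← hA, compl_compl]

lemma isGδ_iff_isFsigma_compl {A : Set X} : IsGδ A ↔ IsFsigma Aᶜ := by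
  rw [isFsigma_iff_isGδ_compl, compl_compl]

/-- A locally finite union of Fσ sets is Fσ. -/
lemma isFsigma_iUnion_of_locallyFinite {ι : Type*} {A : ι → Set X}
    (hlf : LocallyFinite A) (h : ∀ i, IsFsigma (A i)) : IsFsigma (⋃ i, A i) := by
  choose F hFc hFU using h
  have hsub : ∀ n i, F i n ⊆ A i := fun n i => by
    rw [hFU i]; exact Set.subset_iUnion _ n
  refine ⟨fun n => ⋃ i, F i n, fun n => ?_, ?_⟩
  · exact (hlf.subset (hsub n)).isClosed_iUnion fun i => hFc i n
  · simp only [hFU]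
    exact Set.iUnion_comm _

/-- Expansion of a locally finite family to a locally finite family of open sets. -/
lemma exists_locallyFinite_open_expansion [ParacompactSpace X] {ι : Type*} {B : ι → Set X}
    (hlf : LocallyFinite B) :
    ∃ O : ι → Set X, (∀ i, IsOpen (O i)) ∧ (∀ i, B i ⊆ O i) ∧ LocallyFinite O := by
  choose N hNx hNfin using fun x => hlf x
  obtain ⟨v, hvo, hvU, hvlf, hvsub⟩ := precise_refinement (fun x => interior (N x))
    (fun _ => isOpen_interior)
    (Set.iUnion_eq_univ_iff.2 fun x => ⟨x, mem_interior_iff_mem_nhds.2 (hNx x)⟩)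
  refine ⟨fun i => ⋃ (x : X) (_ : (v x ∩ B i).Nonempty), v x,
    fun i => isOpen_iUnion fun x => isOpen_iUnion fun _ => hvo x, fun i b hb => ?_, ?_⟩
  · obtain ⟨x, hx⟩ := Set.iUnion_eq_univ_iff.1 hvU b
    exact Set.mem_iUnion.2 ⟨x, Set.mem_iUnion.2 ⟨⟨b, hx, hb⟩, hx⟩⟩
  · intro y
    obtain ⟨M, hM, hMfin⟩ := hvlf y
    refine ⟨M, hM, Set.Finite.subset
      (Set.Finite.biUnion hMfin fun x _ => hNfin x) ?_⟩
    rintro i ⟨z, hzO, hzM⟩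
    simp only [Set.mem_iUnion] at hzO
    obtain ⟨x, ⟨w, hwv, hwB⟩, hzv⟩ := hzO
    refine Set.mem_iUnion₂.2 ⟨x, ⟨z, hzv, hzM⟩, ⟨w, hwB, interior_subset (hvsub x hwv)⟩⟩

/-- In a perfect paracompact space, a locally finite union of Gδ sets is Gδ. -/
lemma isGδ_iUnion_of_locallyFinite [ParacompactSpace X]
    (hperf : ∀ U : Set X, IsOpen U → IsFsigma U) {ι : Type*} {A : ι → Set X}
    (hlf : LocallyFinite A) (h : ∀ i, IsGδ (A i)) : IsGδ (⋃ i, A i) := by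
  have hclosedGδ : ∀ C : Set X, IsClosed C → IsGδ C := fun C hC => by
    have := isFsigma_iff_isGδ_compl.mp (hperf Cᶜ hC.isOpen_compl)
    rwa [compl_compl] at this
  choose f hfo hfA using fun i => (h i).eq_iInter_nat
  choose g hgo hgA using fun i =>
    (hclosedGδ (closure (A i)) isClosed_closure).eq_iInter_nat
  obtain ⟨O, hOo, hOB, hOlf⟩ := exists_locallyFinite_open_expansion hlf.closure
  set V : ι → ℕ → Set X :=
    fun i n => (⋂ k ∈ Finset.range (n + 1), (f i k ∩ g i k)) ∩ O i with hVdef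
  have hVmem : ∀ i n x, x ∈ V i n ↔ (∀ k ≤ n, x ∈ f i k ∧ x ∈ g i k) ∧ x ∈ O i := by
    intro i n x
    simp [hVdef, Nat.lt_succ_iff]
  have hVo : ∀ i n, IsOpen (V i n) := fun i n =>
    (isOpen_biInter_finset fun k _ => (hfo i k).inter (hgo i k)).inter (hOo i)
  have hVanti : ∀ i ⦃m n : ℕ⦄, m ≤ n → V i n ⊆ V i m := by
    intro i m n hmn x hx
    rw [hVmem] at hx ⊢
    exact ⟨fun k hk => hx.1 k (hk.trans hmn), hx.2⟩
  have hVA : ∀ i x, (∀ n, x ∈ V i n) ↔ x ∈ A i := by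
    intro i x
    constructor
    · intro hx
      rw [hfA i, Set.mem_iInter]
      exact fun k => ((hVmem i k x).1 (hx k)).1 k le_rfl |>.1
    · intro hx n
      have h1 : x ∈ closure (A i) := subset_closure hx
      have h2 : ∀ k, x ∈ f i k := by
        rw [hfA i, Set.mem_iInter] at hx; exact hx
      have h3 : ∀ k, x ∈ g i k := by
        rw [hgA i, Set.mem_iInter] at h1; exact h1
      exact (hVmem i n x).2 ⟨fun k _ => ⟨h2 k, h3 k⟩, hOB i (subset_closure hx)⟩
  have key : ⋃ i, A i = ⋂ n, ⋃ i, V i n := by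
    apply Set.Subset.antisymm
    · exact Set.iUnion_subset fun i x hx =>
        Set.mem_iInter.2 fun n => Set.mem_iUnion.2 ⟨i, (hVA i x).2 hx n⟩
    · intro x hx
      rw [Set.mem_iInter] at hx
      choose idx hidx using fun n => Set.mem_iUnion.1 (hx n)
      obtain ⟨M, hM, hMfin⟩ := hOlf x
      have hmemT : ∀ n, idx n ∈ {i | (O i ∩ M).Nonempty} := fun n =>
        ⟨x, ((hVmem _ _ _).1 (hidx n)).2, mem_of_mem_nhds hM⟩
      haveI : Finite {i | (O i ∩ M).Nonempty} := hMfin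
      obtain ⟨j, hj⟩ := Finite.exists_infinite_fiber
        (fun n => (⟨idx n, hmemT n⟩ : {i | (O i ∩ M).Nonempty}))
      have hj' : ((fun n => (⟨idx n, hmemT n⟩ : {i | (O i ∩ M).Nonempty})) ⁻¹' {j}).Infinite :=
        Set.infinite_coe_iff.mp hj
      refine Set.mem_iUnion.2 ⟨j.1, (hVA j.1 x).1 fun n => ?_⟩
      obtain ⟨m, hm, hnm⟩ := hj'.exists_gt n
      have hm' : (⟨idx m, hmemT m⟩ : {i | (O i ∩ M).Nonempty}) = j := hm
      have hidxm : idx m = j.1 := congrArg Subtype.val hm'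
      exact hVanti _ hnm.le (hidxm ▸ hidx m)
  rw [key]
  exact .iInter_of_isOpen fun n => isOpen_iUnion fun i => hVo i n

end Aux

/-- In a Hausdorff perfect paracompact space, every locally finite cover by ambiguous sets
admits a disjoint locally finite refinement by ambiguous sets which covers the space. -/
theorem disjoint_ambiguous_refinement {X : Type*} [TopologicalSpace X] [T2Space X]
    [ParacompactSpace X] (hperf : ∀ U : Set X, IsOpen U → IsFsigma U)
    (𝒢 : Set (Set X)) (hcover : ⋃₀ 𝒢 = Set.univ)
    (hlf : LocallyFinite (fun G : 𝒢 => (G : Set X)))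
    (hamb : ∀ G ∈ 𝒢, IsFsigma G ∧ IsGδ G) :
    ∃ 𝒜 : Set (Set X), ⋃₀ 𝒜 = Set.univ ∧
      (∀ A ∈ 𝒜, IsFsigma A ∧ IsGδ A) ∧
      𝒜.Pairwise Disjoint ∧
      LocallyFinite (fun A : 𝒜 => (A : Set X)) ∧
      (∀ A ∈ 𝒜, ∃ G ∈ 𝒢, A ⊆ G) := by
  classical
  set f : X → Set X := fun x => {y | ∀ G : 𝒢, y ∈ (G : Set X) ↔ x ∈ (G : Set X)} with hfdef
  have hself : ∀ x, x ∈ f x := fun x G => Iff.rfl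
  have hclass : ∀ y z, z ∈ f y → f y = f z := by
    intro y z hz
    ext w
    constructor
    · intro hw G; rw [(hw G), ← (hz G)]
    · intro hw G; rw [(hw G), (hz G)]
  -- each point belongs to some element of 𝒢
  have hmemG : ∀ x : X, ∃ G : 𝒢, x ∈ (G : Set X) := by
    intro x
    have : x ∈ ⋃₀ 𝒢 := hcover ▸ Set.mem_univ x
    obtain ⟨G, hG, hxG⟩ := this
    exact ⟨⟨G, hG⟩, hxG⟩
  refine ⟨Set.range f, ?_, ?_, ?_, ?_, ?_⟩
  · -- cover
    exact Set.eq_univ_of_forall fun x => ⟨f x, ⟨x, rfl⟩, hself x⟩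
  · -- ambiguity
    rintro A ⟨x, rfl⟩
    set S : Set 𝒢 := {G | x ∈ (G : Set X)} with hSdef
    have hSfin : S.Finite := hlf.point_finite x
    set U : Set X := ⋃ p : {G : 𝒢 // x ∉ (G : Set X)}, ((p.1 : Set X)) with hUdef
    have hUlf : LocallyFinite fun p : {G : 𝒢 // x ∉ (G : Set X)} => ((p.1 : Set X)) :=
      hlf.comp_injective Subtype.val_injective
    have hUFσ : IsFsigma U :=
      isFsigma_iUnion_of_locallyFinite hUlf fun p => (hamb p.1 p.1.2).1
    have hUGδ : IsGδ U :=
      isGδ_iUnion_of_locallyFinite hperf hUlf fun p => (hamb p.1 p.1.2).2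
    have hfx : f x = (⋂ G ∈ S, (G : Set X)) ∩ Uᶜ := by
      ext y
      simp only [hfdef, Set.mem_setOf_eq, Set.mem_inter_iff, Set.mem_iInter,
        Set.mem_compl_iff, hUdef, Set.mem_iUnion, not_exists, hSdef]
      constructor
      · intro hy
        exact ⟨fun G hG => (hy G).2 hG, fun p => fun hyp => p.2 ((hy p.1).1 hyp)⟩
      · rintro ⟨h1, h2⟩ G
        constructor
        · intro hyG
          by_contra hxG
          exact h2 ⟨G, hxG⟩ hyG
        · intro hxG
          exact h1 G hxG
    have hfxc : (f x)ᶜ = (⋃ G ∈ S, ((G : Set X))ᶜ) ∪ U := by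
      rw [hfx]
      rw [Set.compl_inter, compl_compl, Set.compl_iInter₂]
    constructor
    · -- Fσ: complement is Gδ
      rw [isFsigma_iff_isGδ_compl, hfxc]
      refine IsGδ.union (IsGδ.biUnion hSfin fun G _ => ?_) hUGδ
      rw [← isFsigma_iff_isGδ_compl]
      exact (hamb G G.2).1
    · rw [hfx]
      refine IsGδ.inter (IsGδ.biInter hSfin.countable fun G _ => (hamb G G.2).2) ?_
      rw [← isFsigma_iff_isGδ_compl] at *
      exact hUFσ
  · -- pairwise disjoint
    rintro A ⟨x, rfl⟩ B ⟨y, rfl⟩ hne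
    rw [Set.disjoint_left]
    intro z hzx hzy
    exact hne ((hclass x z hzx).trans (hclass y z hzy).symm)
  · -- locally finite
    intro x
    obtain ⟨N, hN, hNfin⟩ := hlf x
    refine ⟨N, hN, ?_⟩
    set T : Set 𝒢 := {G | ((G : Set X) ∩ N).Nonempty} with hTdef
    set Φ : Set X → Set 𝒢 := fun A => {G | A ⊆ (G : Set X)} with hΦdef
    have hPhi : ∀ z : X, Φ (f z) = {G : 𝒢 | z ∈ (G : Set X)} := by
      intro z
      ext G
      simp only [hΦdef, Set.mem_setOf_eq]
      constructor
      · intro h; exact h (hself z)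
      · intro hz w hw; exact (hw G).2 hz
    have hrepr : ∀ A : ↥(Set.range f), ((A : Set X) ∩ N).Nonempty →
        ∃ z ∈ N, (A : Set X) = f z := by
      rintro ⟨A, y, rfl⟩ ⟨z, hzA, hzN⟩
      exact ⟨z, hzN, hclass y z hzA⟩
    apply Set.Finite.of_finite_image (f := fun A : ↥(Set.range f) => Φ (A : Set X))
    · refine Set.Finite.subset (Set.Finite.finite_subsets hNfin) ?_
      rintro s ⟨A, hA, rfl⟩
      obtain ⟨z, hzN, hAz⟩ := hrepr A hA
      show Φ (A : Set X) ⊆ T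
      rw [hAz, hPhi z]
      intro G hG
      exact ⟨z, hG, hzN⟩
    · rintro A hA B hB hAB
      obtain ⟨z, hzN, hAz⟩ := hrepr A hA
      obtain ⟨w, hwN, hBw⟩ := hrepr B hB
      have hAB' : Φ (A : Set X) = Φ (B : Set X) := hAB
      apply Subtype.ext
      rw [hAz, hBw]
      rw [hAz, hBw, hPhi z, hPhi w] at hAB'
      replace hAB := hAB'
      ext u
      constructor
      · intro hu G
        rw [hu G]
        exact Set.ext_iff.1 hAB G
      · intro hu G
        rw [hu G]
        exact (Set.ext_iff.1 hAB G).symm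
  · -- refinement
    rintro A ⟨x, rfl⟩
    obtain ⟨G, hxG⟩ := hmemG x
    exact ⟨G, G.2, fun y hy => (hy G).2 hxG⟩
end
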